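/- arXiv:2107.03016 — 2 statements merged into one kernel-verified Lean document; each statement's English description precedes it below -/
import Mathlib

section
/- Under the hypotheses of the commutation relation (R1) with k analytic at 0, k(0) ≠ 0, k'(0) = 0, and a(±1) = 0, b(±1) = a'(±1): the 0-th derivative of the relation at z = 0 yields 2k'(0)a'(y) + (b'(y) − a''(y))k(0) = 0 for all y, and consequently b(y) = a'(y) for all y. -/
open Complex

/-- Under the commutation relation (R1) with `k(0) ≠ 0`, `k'(0) = 0` and the
boundary conditions `a(±1) = 0`, `b(±1) = a'(±1)`: evaluating the relation at
`z = 0` gives `2k'(0)a'(y) + (b'(y) − a''(y))k(0) = 0`, and hence `b = a'`. -/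
theorem stmt_6 (k a b c : ℝ → ℂ)
    (hk : AnalyticAt ℝ k 0) (hk0 : k 0 ≠ 0) (hk1 : deriv k 0 = 0)
    (ha : ContDiff ℝ (⊤ : ℕ∞) a) (hb : ContDiff ℝ (⊤ : ℕ∞) b) (hc : ContDiff ℝ (⊤ : ℕ∞) c)
    (ha1 : a 1 = 0) (ham1 : a (-1) = 0)
    (hb1 : b 1 = deriv a 1) (hbm1 : b (-1) = deriv a (-1))
    (hrel : ∀ y z : ℝ, y ∈ Set.Icc (-2:ℝ) 2 → y + z ∈ Set.Icc (-2:ℝ) 2 →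
      (a (y + z) - a y) * deriv (deriv k) z
        + (2 * deriv a y + b (y + z) - b y) * deriv k z
        + (c (y + z) - c y + deriv b y - deriv (deriv a) y) * k z = 0) :
    (∀ y ∈ Set.Icc (-2:ℝ) 2,
        2 * deriv k 0 * deriv a y + (deriv b y - deriv (deriv a) y) * k 0 = 0) ∧
    (∀ y ∈ Set.Icc (-2:ℝ) 2, b y = deriv a y) := by
  have key : ∀ y ∈ Set.Icc (-2:ℝ) 2,
      2 * deriv k 0 * deriv a y + (deriv b y - deriv (deriv a) y) * k 0 = 0 := by
    intro y hy
    have h := hrel y 0 hy (by simpa using hy)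
    simp only [add_zero, sub_self, zero_mul, zero_add] at h
    linear_combination h
  refine ⟨key, ?_⟩
  have hda : ContDiff ℝ (⊤ : ℕ∞) (deriv a) := by
    have : ContDiff ℝ (((⊤ : ℕ∞) : WithTop ℕ∞) + 1) a := ha.of_le (by exact_mod_cast (le_top : (⊤:ℕ∞) + 1 ≤ ⊤))
    exact (contDiff_succ_iff_deriv.mp this).2.2
  have hderiv : ∀ y ∈ Set.Icc (-2:ℝ) 2, deriv b y = deriv (deriv a) y := by
    intro y hy
    have h := key y hy
    rw [hk1] at h
    simp only [mul_zero, zero_mul, zero_add] at h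
    rcases mul_eq_zero.mp h with h' | h'
    · exact sub_eq_zero.mp h'
    · exact absurd h' hk0
  set g : ℝ → ℂ := fun y => b y - deriv a y with hg
  have hgd : Differentiable ℝ g :=
    (hb.differentiable (by simp)).sub (hda.differentiable (by simp))
  have hconv : Convex ℝ (Set.Icc (-2:ℝ) 2) := convex_Icc _ _
  have hud : UniqueDiffOn ℝ (Set.Icc (-2:ℝ) 2) := uniqueDiffOn_Icc (by norm_num)
  intro y hy
  have h1 : (1:ℝ) ∈ Set.Icc (-2:ℝ) 2 := by norm_num
  have hconst : g y = g 1 := by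
    apply hconv.is_const_of_fderivWithin_eq_zero hgd.differentiableOn _ hy h1
    intro x hx
    rw [(hgd x).fderivWithin (hud x hx)]
    apply ContinuousLinearMap.ext_ring
    have : deriv g x = 0 := by
      rw [hg]
      rw [deriv_fun_sub ((hb.differentiable (by simp)) x) ((hda.differentiable (by simp)) x)]
      rw [hderiv x hx]
      ring
    simpa [← toSpanSingleton_deriv, this] using this
  have : g 1 = 0 := by simp [hg, hb1]
  have := hconst.trans this
  simpa [hg, sub_eq_zero] using this
end

section
/- Let λ ≠ 0 and b₃ ≠ 0 be complex numbers, and set k(z) = 1/(e^{λz} − 1). Then for any a₂, b₂, c₂ ∈ ℂ the equation 3(b₃k' + λb₃k)e^{λz}z + (a₂k'' + b₂k' + c₂k)e^{λz} + (2λa₂ − b₂)k' − a₂k'' − (λ²a₂ − b₂λ + c₂ − 3b₃)k = 0 fails at some z with e^{λz} ≠ 1. -/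
/-!
Write `E = e^{λx}` and `k = 1/(E - 1)`, so that `k' = -λ k (k + 1)` and
`k'' = λ² k (k + 1) (2k + 1)`. Multiplying the equation by `(E - 1)³` turns it into
`x · p(E) + q(E) = 0` with `p = 3 b₃ λ (X - X²) ≠ 0` and `q` a polynomial. This holds for all
small real `x ≠ 0`, hence, by the identity theorem, for all complex `x`. Since `e^{λx}` has the
period `T = 2πi/λ`, subtracting the identity at `x` from the one at `x + T` leaves
`T · p(e^{λx}) = 0`; as `e^{λx}` takes every nonzero value, `p = 0`, a contradiction.
-/

open Complex Polynomial Filter Topology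

theorem eventually_exp_mul_ofReal_ne_one {lam : ℂ} (hlam : lam ≠ 0) :
    ∀ᶠ x : ℝ in 𝓝[≠] 0, exp (lam * x) ≠ 1 := by
  have h : HasDerivAt (fun x : ℝ => exp (lam * x)) (exp (lam * (0 : ℝ)) * lam) 0 := by
    simpa using (((hasDerivAt_id ((0 : ℝ) : ℂ)).const_mul lam).cexp).comp_ofReal
  simpa using h.eventually_ne (c := 1) (by simpa using hlam)

theorem Differentiable.eq_zero_of_frequently_ofReal_eq_zero {G : ℂ → ℂ}
    (hG : Differentiable ℂ G) {x₀ : ℝ} (h : ∃ᶠ x : ℝ in 𝓝[≠] x₀, G x = 0) : G = 0 := by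
  have hofReal : Tendsto ((↑) : ℝ → ℂ) (𝓝[≠] x₀) (𝓝[≠] (x₀ : ℂ)) :=
    continuous_ofReal.continuousWithinAt.tendsto_nhdsWithin fun x hx => by simpa using hx
  exact AnalyticOnNhd.eq_of_frequently_eq (fun z _ => hG.analyticAt z) analyticOnNhd_const
    (hofReal.frequently h)

theorem Polynomial.eq_zero_of_forall_mul_eval_exp_add_eval_exp_eq_zero {lam : ℂ} (hlam : lam ≠ 0)
    {p q : ℂ[X]} (h : ∀ w : ℂ, w * p.eval (exp (lam * w)) + q.eval (exp (lam * w)) = 0) :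
    p = 0 := by
  set T := 2 * Real.pi * I / lam
  have hT : T ≠ 0 := div_ne_zero (by simp [Real.pi_ne_zero, I_ne_zero]) hlam
  have hperiodic (w : ℂ) : exp (lam * (w + T)) = exp (lam * w) := by
    rw [mul_add, mul_div_cancel₀ _ hlam, exp_add, exp_two_pi_mul_I, mul_one]
  refine p.eq_zero_of_infinite_isRoot ((Set.finite_singleton 0).infinite_compl.mono fun u hu => ?_)
  obtain ⟨w, rfl⟩ : ∃ w, exp (lam * w) = u :=
    ⟨log u / lam, by rw [mul_div_cancel₀ _ hlam, exp_log hu]⟩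
  have hshift := h (w + T)
  rw [hperiodic] at hshift
  exact (mul_eq_zero.1 (by linear_combination hshift - h w : T * _ = 0)).resolve_left hT

theorem Polynomial.eq_zero_of_forall_ofReal_mul_eval_exp_add_eval_exp_eq_zero {lam : ℂ}
    (hlam : lam ≠ 0) {p q : ℂ[X]}
    (h : ∀ x : ℝ, exp (lam * x) ≠ 1 → x * p.eval (exp (lam * x)) + q.eval (exp (lam * x)) = 0) :
    p = 0 := by
  have hG : (fun w : ℂ => w * p.eval (exp (lam * w)) + q.eval (exp (lam * w))) = 0 :=
    Differentiable.eq_zero_of_frequently_ofReal_eq_zero (x₀ := 0) (by fun_prop)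
      ((eventually_exp_mul_ofReal_ne_one hlam).mono h).frequently
  exact eq_zero_of_forall_mul_eval_exp_add_eval_exp_eq_zero hlam (q := q) (congrFun hG)

section InvExpSubOne

variable {lam : ℂ} {x : ℝ}

theorem hasDerivAt_inv_exp_sub_one (hx : exp (lam * x) ≠ 1) :
    HasDerivAt (fun t : ℝ => (exp (lam * t) - 1)⁻¹)
      (-lam * (exp (lam * x) - 1)⁻¹ * ((exp (lam * x) - 1)⁻¹ + 1)) x := by
  have hne : exp (lam * x) - 1 ≠ 0 := sub_ne_zero.2 hx
  have hexp : HasDerivAt (fun w : ℂ => exp (lam * w)) (exp (lam * x) * lam) x := by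
    simpa using ((hasDerivAt_id (x : ℂ)).const_mul lam).cexp
  convert ((hexp.sub_const 1).fun_inv hne).comp_ofReal using 1
  field_simp
  ring

theorem deriv_inv_exp_sub_one (hx : exp (lam * x) ≠ 1) :
    deriv (fun t : ℝ => (exp (lam * t) - 1)⁻¹) x =
      -lam * (exp (lam * x) - 1)⁻¹ * ((exp (lam * x) - 1)⁻¹ + 1) :=
  (hasDerivAt_inv_exp_sub_one hx).deriv

theorem deriv_deriv_inv_exp_sub_one (hx : exp (lam * x) ≠ 1) :
    deriv (deriv fun t : ℝ => (exp (lam * t) - 1)⁻¹) x =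
      lam ^ 2 * (exp (lam * x) - 1)⁻¹ * ((exp (lam * x) - 1)⁻¹ + 1)
        * (2 * (exp (lam * x) - 1)⁻¹ + 1) := by
  have hopen : IsOpen {t : ℝ | exp (lam * t) ≠ 1} :=
    isOpen_compl_singleton.preimage (by fun_prop)
  have heq : deriv (fun t : ℝ => (exp (lam * t) - 1)⁻¹) =ᶠ[𝓝 x]
      fun t => -lam * (exp (lam * t) - 1)⁻¹ * ((exp (lam * t) - 1)⁻¹ + 1) :=
    eventually_of_mem (hopen.mem_nhds hx) fun t ht => deriv_inv_exp_sub_one ht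
  have hk := hasDerivAt_inv_exp_sub_one hx
  rw [heq.deriv_eq, ((hk.const_mul (-lam)).fun_mul (hk.add_const 1)).deriv]
  ring

end InvExpSubOne

/-- With `k(z) = 1/(e^{λz} − 1)`, `λ ≠ 0`, `b₃ ≠ 0`, the equation arising from the
`y³`/`y²` coefficients fails at some `z` with `e^{λz} ≠ 1`. -/
theorem stmt_16 (lam b₃ : ℂ) (hlam : lam ≠ 0) (hb₃ : b₃ ≠ 0) :
    ∀ a₂ b₂ c₂ : ℂ, ∃ z : ℝ, Complex.exp (lam * z) ≠ 1 ∧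
      ¬ (3 * (b₃ * deriv (fun z : ℝ => (Complex.exp (lam * z) - 1)⁻¹) z
              + lam * b₃ * (Complex.exp (lam * z) - 1)⁻¹) * Complex.exp (lam * z) * z
          + (a₂ * deriv (deriv (fun z : ℝ => (Complex.exp (lam * z) - 1)⁻¹)) z
              + b₂ * deriv (fun z : ℝ => (Complex.exp (lam * z) - 1)⁻¹) z
              + c₂ * (Complex.exp (lam * z) - 1)⁻¹) * Complex.exp (lam * z)
          + (2 * lam * a₂ - b₂) * deriv (fun z : ℝ => (Complex.exp (lam * z) - 1)⁻¹) z
          - a₂ * deriv (deriv (fun z : ℝ => (Complex.exp (lam * z) - 1)⁻¹)) z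
          - (lam ^ 2 * a₂ - b₂ * lam + c₂ - 3 * b₃) * (Complex.exp (lam * z) - 1)⁻¹
          = 0) := by
  intro a₂ b₂ c₂
  by_contra! h
  have hp : C (3 * b₃ * lam) * (X - X ^ 2) ≠ 0 := fun hp => by
    have h2 := congrArg (eval 2) hp
    norm_num at h2
    exact h2.elim hb₃ hlam
  refine hp (eq_zero_of_forall_ofReal_mul_eval_exp_add_eval_exp_eq_zero hlam
    (q := C (lam ^ 2 * a₂ - b₂ * lam + c₂) * (X - 1) ^ 3 + C (3 * b₃) * (X - 1) ^ 2)
    fun x hx => ?_)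
  have heq := h x hx
  rw [deriv_deriv_inv_exp_sub_one hx, deriv_inv_exp_sub_one hx] at heq
  simp only [eval_add, eval_mul, eval_sub, eval_pow, eval_C, eval_X, eval_one]
  field_simp at heq
  linear_combination heq
end
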